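/- arXiv:1801.00977 — 2 statements merged into one kernel-verified Lean document; each statement's English description precedes it below -/
import Mathlib

section
/- A family (X_α) of real random variables has tight laws if and only if the family of integrated quantile functions {iqf_{X_α}} is pointwise bounded on (0,1), which in turn is equivalent to: for every u, v ∈ (0,1), sup_α |iqf_{X_α}(u) − iqf_{X_α}(v)| < ∞, and also equivalent to the equicontinuity of {iqf_{X_α}} on every compact subinterval [a,b] ⊂ (0,1). -/
open MeasureTheory Filter Set

noncomputable def cdf {Ω : Type*} [MeasurableSpace Ω] (P : Measure Ω) (X : Ω → ℝ) : ℝ → ℝ :=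
  fun x => (P {ω | X ω ≤ x}).toReal

noncomputable def idf {Ω : Type*} [MeasurableSpace Ω] (P : Measure Ω) (X : Ω → ℝ) : ℝ → ℝ :=
  fun x => ∫ t in (0:ℝ)..x, cdf P X t

noncomputable def iqf {Ω : Type*} [MeasurableSpace Ω] (P : Measure Ω) (X : Ω → ℝ) : ℝ → EReal :=
  fun u => ⨆ x : ℝ, ((x * u - idf P X x : ℝ) : EReal)


section Stmt17Aux

open intervalIntegral Topology


variable {F : ℝ → ℝ}

lemma intF (hF : Monotone F) (a b : ℝ) : IntervalIntegrable F volume a b :=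
  hF.intervalIntegrable

lemma J_sub (hF : Monotone F) (y x : ℝ) :
    (∫ t in (0:ℝ)..x, F t) - (∫ t in (0:ℝ)..y, F t) = ∫ t in y..x, F t :=
  integral_interval_sub_left (intF hF 0 x) (intF hF 0 y)

lemma int_ub (hF : Monotone F) {y x M : ℝ} (h : y ≤ x) (hM : ∀ t ∈ Icc y x, F t ≤ M) :
    (∫ t in y..x, F t) ≤ (x - y) * M := by
  have := integral_mono_on (μ := volume) (f := F) (g := fun _ => M) h (intF hF y x)
    intervalIntegrable_const hM
  simpa [intervalIntegral.integral_const, smul_eq_mul, mul_comm] using this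

lemma int_lb (hF : Monotone F) {y x m : ℝ} (h : y ≤ x) (hm : ∀ t ∈ Icc y x, m ≤ F t) :
    (x - y) * m ≤ ∫ t in y..x, F t := by
  have := integral_mono_on (μ := volume) (f := fun _ => m) (g := F) h
    intervalIntegrable_const (intF hF y x) hm
  simpa [intervalIntegral.integral_const, smul_eq_mul, mul_comm] using this

/-- master pointwise upper bound -/
lemma g_le (hF : Monotone F) (h0 : ∀ t, 0 ≤ F t) (h1 : ∀ t, F t ≤ 1)
    {u v' u'' C C' : ℝ} (hC : 0 ≤ C) (hC' : 0 ≤ C') (hu0 : 0 ≤ u) (huv : u ≤ v')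
    (hu'' : u'' ≤ u) (hFC : v' ≤ F C) (hFC' : F (-C') ≤ u'') (y : ℝ) :
    y * u - (∫ t in (0:ℝ)..y, F t) ≤ C + C' := by
  have hv1 : v' ≤ 1 := le_trans hFC (h1 C)
  have hu''0 : 0 ≤ u'' := le_trans (h0 _) hFC'
  rcases lt_or_ge C y with hy | hy
  · -- right region
    have hJC : 0 ≤ ∫ t in (0:ℝ)..C, F t := by
      have := int_lb hF hC (m := 0) (fun t _ => h0 t)
      simpa using this
    have hseg : (y - C) * v' ≤ ∫ t in C..y, F t :=
      int_lb hF hy.le (fun t ht => le_trans hFC (hF ht.1))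
    have hsplit : (∫ t in (0:ℝ)..y, F t) - (∫ t in (0:ℝ)..C, F t) = ∫ t in C..y, F t :=
      J_sub hF C y
    nlinarith [hy.le, sub_nonneg.2 huv]
  rcases le_or_gt (-C') y with hy' | hy'
  · -- middle region
    rcases le_or_gt 0 y with h0y | h0y
    · have hJ : 0 ≤ ∫ t in (0:ℝ)..y, F t := by
        have := int_lb hF h0y (m := 0) (fun t _ => h0 t)
        simpa using this
      nlinarith
    · have hJ : -(∫ t in (0:ℝ)..y, F t) ≤ (0 - y) * 1 := by
        have h2 := int_ub hF h0y.le (M := 1) (fun t _ => h1 t)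
        have h3 : (∫ t in y..(0:ℝ), F t) = -(∫ t in (0:ℝ)..y, F t) := by
          have := J_sub hF y 0
          simp only [intervalIntegral.integral_same] at this
          linarith
        linarith
      nlinarith
  · -- left region
    have hJC' : -(∫ t in (0:ℝ)..(-C'), F t) ≤ C' := by
      have h2 := int_ub hF (neg_nonpos.2 hC') (M := 1) (fun t _ => h1 t)
      have h3 : (∫ t in (-C')..(0:ℝ), F t) = -(∫ t in (0:ℝ)..(-C'), F t) := by
        have := J_sub hF (-C') 0
        simp only [intervalIntegral.integral_same] at this
        linarith
      linarith
    have hseg : (∫ t in y..(-C'), F t) ≤ ((-C') - y) * u'' :=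
      int_ub hF hy'.le (fun t ht => le_trans (hF ht.2) hFC')
    have hsplit : (∫ t in (0:ℝ)..(-C'), F t) - (∫ t in (0:ℝ)..y, F t) = ∫ t in y..(-C'), F t :=
      J_sub hF y (-C')
    nlinarith [hy'.le]


noncomputable def S (F : ℝ → ℝ) (u : ℝ) : ℝ := ⨆ x : ℝ, (x * u - ∫ t in (0:ℝ)..x, F t)

lemma S_nonneg {u : ℝ} (hB : BddAbove (range fun x : ℝ => x * u - ∫ t in (0:ℝ)..x, F t)) :
    0 ≤ S F u := by
  have h := le_ciSup hB 0
  simpa [S] using h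

lemma S_le {u M : ℝ} (h : ∀ y : ℝ, y * u - (∫ t in (0:ℝ)..y, F t) ≤ M) : S F u ≤ M :=
  ciSup_le h

lemma le_S {u : ℝ} (hB : BddAbove (range fun x : ℝ => x * u - ∫ t in (0:ℝ)..x, F t)) (y : ℝ) :
    y * u - (∫ t in (0:ℝ)..y, F t) ≤ S F u :=
  le_ciSup hB y

/-- L1 : if `F C ≤ v < v'` then `S v + C*(v'-v) ≤ S v'`. -/
lemma S_right_lower (hF : Monotone F) {v v' C : ℝ} (hvv : v < v') (hFC : F C ≤ v)
    (hB : BddAbove (range fun x : ℝ => x * v' - ∫ t in (0:ℝ)..x, F t)) :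
    S F v + C * (v' - v) ≤ S F v' := by
  have key : ∀ y : ℝ, y * v - (∫ t in (0:ℝ)..y, F t) ≤ S F v' - C * (v' - v) := by
    intro y
    rcases le_or_gt C y with hy | hy
    · have h1 := le_S hB y
      nlinarith
    · have h1 := le_S hB C
      have h2 : (∫ t in y..C, F t) ≤ (C - y) * v :=
        int_ub hF hy.le (fun t ht => le_trans (hF ht.2) hFC)
      have h3 := J_sub hF y C
      nlinarith
  have := S_le key
  linarith

/-- L2 : if `v < v' ≤ F C`, `0 ≤ v`, `0 ≤ C` then `S v' ≤ S v + C*(v'-v)`. -/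
lemma S_right_upper (hF : Monotone F) {v v' C : ℝ} (hv0 : 0 ≤ v) (hvv : v < v')
    (hFC : v' ≤ F C)
    (hB : BddAbove (range fun x : ℝ => x * v - ∫ t in (0:ℝ)..x, F t)) :
    S F v' ≤ S F v + C * (v' - v) := by
  apply S_le
  intro y
  rcases le_or_gt y C with hy | hy
  · have h1 := le_S hB y
    nlinarith
  · have h1 := le_S hB C
    have h2 : (y - C) * v' ≤ ∫ t in C..y, F t :=
      int_lb hF hy.le (fun t ht => le_trans hFC (hF ht.1))
    have h3 := J_sub hF C y
    nlinarith

/-- L3 : if `u' < u ≤ F (-C)` then `S u + C*(u-u') ≤ S u'`. -/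
lemma S_left_lower (hF : Monotone F) {u u' C : ℝ} (hu' : u' < u) (hFC : u ≤ F (-C))
    (hB : BddAbove (range fun x : ℝ => x * u' - ∫ t in (0:ℝ)..x, F t)) :
    S F u + C * (u - u') ≤ S F u' := by
  have key : ∀ y : ℝ, y * u - (∫ t in (0:ℝ)..y, F t) ≤ S F u' - C * (u - u') := by
    intro y
    rcases le_or_gt y (-C) with hy | hy
    · have h1 := le_S hB y
      nlinarith
    · have h1 := le_S hB (-C)
      have h2 : (y - (-C)) * u ≤ ∫ t in (-C)..y, F t :=
        int_lb hF hy.le (fun t ht => le_trans hFC (hF ht.1))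
      have h3 := J_sub hF (-C) y
      nlinarith
  have := S_le key
  linarith

/-- L4 : if `F (-C) ≤ u' < u`, `0 ≤ C`, `u ≤ 1` then `S u' ≤ S u + C*(u-u')`. -/
lemma S_left_upper (hF : Monotone F) {u u' C : ℝ} (hu' : u' < u) (hFC : F (-C) ≤ u')
    (hB : BddAbove (range fun x : ℝ => x * u - ∫ t in (0:ℝ)..x, F t)) :
    S F u' ≤ S F u + C * (u - u') := by
  apply S_le
  intro y
  rcases le_or_gt (-C) y with hy | hy
  · have h1 := le_S hB y
    nlinarith
  · have h1 := le_S hB (-C)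
    have h2 : (∫ t in y..(-C), F t) ≤ ((-C) - y) * u' :=
      int_ub hF hy.le (fun t ht => le_trans (hF ht.2) hFC)
    have h3 := J_sub hF y (-C)
    nlinarith


section Prob

open Topology


variable {Ω : Type*} [MeasurableSpace Ω] (P : Measure Ω) [IsProbabilityMeasure P]
  (X : Ω → ℝ)

lemma cdf_eq' (hX : Measurable X) :
    cdf P X = fun x => ProbabilityTheory.cdf (P.map X) x := by
  have : IsProbabilityMeasure (P.map X) := Measure.isProbabilityMeasure_map hX.aemeasurable
  funext x
  rw [ProbabilityTheory.cdf_eq_real, measureReal_def, Measure.map_apply hX measurableSet_Iic]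
  rfl

lemma cdf_mono (hX : Measurable X) : Monotone (cdf P X) := by
  rw [cdf_eq' P X hX]; exact fun a b h => ProbabilityTheory.monotone_cdf _ h

lemma cdf_nonneg' (hX : Measurable X) : ∀ t, 0 ≤ cdf P X t := by
  rw [cdf_eq' P X hX]; exact fun t => ProbabilityTheory.cdf_nonneg _ t

lemma cdf_le_one' (hX : Measurable X) : ∀ t, cdf P X t ≤ 1 := by
  rw [cdf_eq' P X hX]; exact fun t => ProbabilityTheory.cdf_le_one _ t

lemma cdf_tendsto_top (hX : Measurable X) : Tendsto (cdf P X) atTop (𝓝 1) := by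
  rw [cdf_eq' P X hX]; exact ProbabilityTheory.tendsto_cdf_atTop _

lemma cdf_tendsto_bot (hX : Measurable X) : Tendsto (cdf P X) atBot (𝓝 0) := by
  rw [cdf_eq' P X hX]; exact ProbabilityTheory.tendsto_cdf_atBot _

/-- existence of a nonnegative `C` with `v' ≤ cdf C` for `v' < 1`. -/
lemma exists_right (hX : Measurable X) {v' : ℝ} (h : v' < 1) :
    ∃ C : ℝ, 0 ≤ C ∧ v' ≤ cdf P X C := by
  obtain ⟨C, hC⟩ := ((cdf_tendsto_top P X hX).eventually (eventually_ge_nhds h)).exists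
  exact ⟨max C 0, le_max_right _ _, le_trans hC (cdf_mono P X hX (le_max_left _ _))⟩

lemma exists_left (hX : Measurable X) {u'' : ℝ} (h : 0 < u'') :
    ∃ C : ℝ, 0 ≤ C ∧ cdf P X (-C) ≤ u'' := by
  obtain ⟨C, hC⟩ := ((cdf_tendsto_bot P X hX).eventually (eventually_le_nhds h)).exists
  refine ⟨max (-C) 0, le_max_right _ _, le_trans (cdf_mono P X hX ?_) hC⟩
  have : -max (-C) 0 ≤ -(-C) := neg_le_neg (le_max_left _ _)
  simpa using this

lemma prob_sum (hX : Measurable X) (C : ℝ) :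
    cdf P X C + (P {ω | ¬ X ω ≤ C}).toReal = 1 := by
  have hms : MeasurableSet {ω | X ω ≤ C} := hX measurableSet_Iic
  have h := measure_add_measure_compl (μ := P) hms
  rw [measure_univ] at h
  have h2 : (P {ω | X ω ≤ C}).toReal + (P {ω | X ω ≤ C}ᶜ).toReal = 1 := by
    rw [← ENNReal.toReal_add (measure_ne_top _ _) (measure_ne_top _ _), h]; simp
  simpa [cdf, compl_setOf] using h2

/-- from the tail bound we get the cdf bounds -/
lemma cdf_of_tail (hX : Measurable X) {C ε : ℝ} (h : (P {ω | C < |X ω|}).toReal < ε) :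
    1 - ε < cdf P X C ∧ cdf P X (-(C+1)) < ε := by
  constructor
  · have hsub : {ω | ¬ X ω ≤ C} ⊆ {ω | C < |X ω|} := by
      intro ω hω
      exact lt_of_lt_of_le (lt_of_not_ge hω) (le_abs_self _)
    have hm : (P {ω | ¬ X ω ≤ C}).toReal ≤ (P {ω | C < |X ω|}).toReal :=
      ENNReal.toReal_mono (measure_ne_top _ _) (measure_mono hsub)
    have := prob_sum P X hX C
    linarith
  · have hsub : {ω | X ω ≤ -(C+1)} ⊆ {ω | C < |X ω|} := by
      intro ω hω
      simp only [mem_setOf_eq] at *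
      have h2 : C + 1 ≤ -X ω := by linarith
      calc C < C + 1 := by linarith
        _ ≤ -X ω := h2
        _ ≤ |X ω| := neg_le_abs _
    have hm : (P {ω | X ω ≤ -(C+1)}).toReal ≤ (P {ω | C < |X ω|}).toReal :=
      ENNReal.toReal_mono (measure_ne_top _ _) (measure_mono hsub)
    exact lt_of_le_of_lt hm h

/-- tail bound from cdf bounds -/
lemma tail_of_cdf (hX : Measurable X) {C : ℝ} {δ δ' : ℝ}
    (h1 : 1 - δ ≤ cdf P X C) (h2 : cdf P X (-C) ≤ δ') :
    (P {ω | C < |X ω|}).toReal ≤ δ + δ' := by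
  have hsub : {ω | C < |X ω|} ⊆ {ω | ¬ X ω ≤ C} ∪ {ω | X ω ≤ -C} := by
    intro ω hω
    simp only [mem_setOf_eq, mem_union] at *
    rcases le_or_gt (X ω) C with hle | hlt
    · right
      rcases abs_cases (X ω) with ⟨he, _⟩ | ⟨he, _⟩
      · linarith [hω, he ▸ hω]
      · rw [he] at hω; linarith
    · left; exact not_le.2 hlt
  have hA : (P {ω | C < |X ω|}).toReal ≤
      (P {ω | ¬ X ω ≤ C}).toReal + (P {ω | X ω ≤ -C}).toReal := by
    calc (P {ω | C < |X ω|}).toReal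
        ≤ (P {ω | ¬ X ω ≤ C} + P {ω | X ω ≤ -C}).toReal := by
          apply ENNReal.toReal_mono
          · exact ENNReal.add_ne_top.2 ⟨measure_ne_top _ _, measure_ne_top _ _⟩
          · exact le_trans (measure_mono hsub) (measure_union_le _ _)
      _ = (P {ω | ¬ X ω ≤ C}).toReal + (P {ω | X ω ≤ -C}).toReal :=
          ENNReal.toReal_add (measure_ne_top _ _) (measure_ne_top _ _)
  have hs := prob_sum P X hX C
  have hc : (P {ω | X ω ≤ -C}).toReal = cdf P X (-C) := rfl
  linarith

end Prob


variable {Ω : Type*} [MeasurableSpace Ω] (P : Measure Ω) [IsProbabilityMeasure P] (X : Ω → ℝ)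

lemma bddAbove_g (hX : Measurable X) {u : ℝ} (hu : u ∈ Ioo (0:ℝ) 1) :
    BddAbove (range fun x : ℝ => x * u - ∫ t in (0:ℝ)..x, cdf P X t) := by
  obtain ⟨C₁, hC₁0, hC₁⟩ := exists_right P X hX (v' := (1+u)/2) (by linarith [hu.2])
  obtain ⟨C₂, hC₂0, hC₂⟩ := exists_left P X hX (u'' := u/2) (by linarith [hu.1])
  refine ⟨C₁ + C₂, ?_⟩
  rintro _ ⟨y, rfl⟩
  exact g_le (cdf_mono P X hX) (cdf_nonneg' P X hX) (cdf_le_one' P X hX) hC₁0 hC₂0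
    hu.1.le (by linarith [hu.2]) (by linarith [hu.1]) hC₁ hC₂ y

lemma iqf_eq (hX : Measurable X) {u : ℝ} (hu : u ∈ Ioo (0:ℝ) 1) :
    iqf P X u = ((S (cdf P X) u : ℝ) : EReal) := by
  have hbdd : BddAbove (range fun x : ℝ => x * u - idf P X x) := bddAbove_g P X hX hu
  have := Monotone.map_ciSup_of_continuousAt (f := ((↑) : ℝ → EReal))
    (g := fun x : ℝ => x * u - idf P X x)
    (continuous_coe_real_ereal.continuousAt) (fun a b h => EReal.coe_le_coe_iff.2 h) hbdd
  exact this.symm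


end Stmt17Aux

theorem stmt17 {ι : Type*} {Ω : ι → Type*} [∀ i, MeasurableSpace (Ω i)]
    (P : ∀ i, Measure (Ω i)) [∀ i, IsProbabilityMeasure (P i)]
    (X : ∀ i, Ω i → ℝ) (hX : ∀ i, Measurable (X i)) :
    ((∀ ε > (0:ℝ), ∃ C > (0:ℝ), ∀ i, ((P i) {ω | C < |X i ω|}).toReal < ε) ↔
      (∀ u ∈ Set.Ioo (0:ℝ) 1, ∃ M : ℝ,
        ∀ i, iqf (P i) (X i) u ∈ Set.Icc (((-M : ℝ)) : EReal) ((M : ℝ) : EReal))) ∧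
    ((∀ ε > (0:ℝ), ∃ C > (0:ℝ), ∀ i, ((P i) {ω | C < |X i ω|}).toReal < ε) ↔
      (∀ u ∈ Set.Ioo (0:ℝ) 1, ∀ v ∈ Set.Ioo (0:ℝ) 1, ∃ M : ℝ,
        ∀ i, iqf (P i) (X i) u - iqf (P i) (X i) v ≤ ((M : ℝ) : EReal) ∧
             iqf (P i) (X i) v - iqf (P i) (X i) u ≤ ((M : ℝ) : EReal))) ∧
    ((∀ ε > (0:ℝ), ∃ C > (0:ℝ), ∀ i, ((P i) {ω | C < |X i ω|}).toReal < ε) ↔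
      (∀ a b : ℝ, 0 < a → a ≤ b → b < 1 →
        EquicontinuousOn (fun i => fun u : ℝ => (iqf (P i) (X i) u).toReal) (Set.Icc a b))) := by
  have hmono : ∀ i, Monotone (cdf (P i) (X i)) := fun i => cdf_mono _ _ (hX i)
  have h0 : ∀ i, ∀ t, 0 ≤ cdf (P i) (X i) t := fun i => cdf_nonneg' _ _ (hX i)
  have h1 : ∀ i, ∀ t, cdf (P i) (X i) t ≤ 1 := fun i => cdf_le_one' _ _ (hX i)
  have hBdd : ∀ i, ∀ u ∈ Ioo (0:ℝ) 1,
      BddAbove (range fun x : ℝ => x * u - ∫ t in (0:ℝ)..x, cdf (P i) (X i) t) :=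
    fun i u hu => bddAbove_g _ _ (hX i) hu
  have hiqf : ∀ i, ∀ u ∈ Ioo (0:ℝ) 1,
      iqf (P i) (X i) u = ((S (cdf (P i) (X i)) u : ℝ) : EReal) :=
    fun i u hu => iqf_eq _ _ (hX i) hu
  have hSnn : ∀ i, ∀ u ∈ Ioo (0:ℝ) 1, 0 ≤ S (cdf (P i) (X i)) u :=
    fun i u hu => S_nonneg (hBdd i u hu)
  have tightR : (∀ ε > (0:ℝ), ∃ C > (0:ℝ), ∀ i, ((P i) {ω | C < |X i ω|}).toReal < ε) →
      ∀ v ∈ Ioo (0:ℝ) 1, ∃ C, 0 ≤ C ∧ ∀ i, v ≤ cdf (P i) (X i) C := by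
    intro ht v hv
    obtain ⟨C, hCpos, hC⟩ := ht (1 - v) (by linarith [hv.2])
    refine ⟨C, hCpos.le, fun i => ?_⟩
    have h := (cdf_of_tail _ _ (hX i) (hC i)).1
    linarith
  have tightL : (∀ ε > (0:ℝ), ∃ C > (0:ℝ), ∀ i, ((P i) {ω | C < |X i ω|}).toReal < ε) →
      ∀ u ∈ Ioo (0:ℝ) 1, ∃ C, 0 ≤ C ∧ ∀ i, cdf (P i) (X i) (-C) ≤ u := by
    intro ht u hu
    obtain ⟨C, hCpos, hC⟩ := ht u hu.1
    exact ⟨C + 1, by linarith, fun i => ((cdf_of_tail _ _ (hX i) (hC i)).2).le⟩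
  have tight_of : (∀ v ∈ Ioo (0:ℝ) 1, ∃ C, 0 ≤ C ∧ ∀ i, v ≤ cdf (P i) (X i) C) →
      (∀ u ∈ Ioo (0:ℝ) 1, ∃ C, 0 ≤ C ∧ ∀ i, cdf (P i) (X i) (-C) ≤ u) →
      (∀ ε > (0:ℝ), ∃ C > (0:ℝ), ∀ i, ((P i) {ω | C < |X i ω|}).toReal < ε) := by
    intro hR hL ε hε
    rcases le_or_gt ε 1 with hε1 | hε1
    · obtain ⟨C₁, hC₁0, hC₁⟩ := hR (1 - ε/4) ⟨by linarith, by linarith⟩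
      obtain ⟨C₂, hC₂0, hC₂⟩ := hL (ε/4) ⟨by linarith, by linarith⟩
      refine ⟨max C₁ C₂ + 1,
        by have := le_trans hC₁0 (le_max_left C₁ C₂); linarith, fun i => ?_⟩
      have e1 : 1 - ε/4 ≤ cdf (P i) (X i) (max C₁ C₂ + 1) :=
        le_trans (hC₁ i) (hmono i (by have := le_max_left C₁ C₂; linarith))
      have e2 : cdf (P i) (X i) (-(max C₁ C₂ + 1)) ≤ ε/4 :=
        le_trans (hmono i (by have := le_max_right C₁ C₂; linarith)) (hC₂ i)
      have := tail_of_cdf _ _ (hX i) e1 e2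
      linarith
    · refine ⟨1, one_pos, fun i => ?_⟩
      have h2 : ((P i) {ω | 1 < |X i ω|}).toReal ≤ ((P i) univ).toReal :=
        ENNReal.toReal_mono (measure_ne_top _ _) (measure_mono (subset_univ _))
      simp only [measure_univ, ENNReal.toReal_one] at h2
      linarith
  have keyUB : (∀ ε > (0:ℝ), ∃ C > (0:ℝ), ∀ i, ((P i) {ω | C < |X i ω|}).toReal < ε) →
      ∀ u ∈ Ioo (0:ℝ) 1, ∃ M : ℝ, 0 ≤ M ∧ ∀ i, S (cdf (P i) (X i)) u ≤ M := by
    intro ht u hu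
    obtain ⟨C₁, hC₁0, hC₁⟩ := tightR ht ((1+u)/2) ⟨by linarith [hu.1], by linarith [hu.2]⟩
    obtain ⟨C₂, hC₂0, hC₂⟩ := tightL ht (u/2) ⟨by linarith [hu.1], by linarith [hu.1, hu.2]⟩
    exact ⟨C₁ + C₂, by linarith, fun i => S_le (fun y =>
      g_le (hmono i) (h0 i) (h1 i) hC₁0 hC₂0 hu.1.le (by linarith [hu.2]) (by linarith [hu.1])
        (hC₁ i) (hC₂ i) y)⟩
  have fromR : ∀ v v' : ℝ, v ∈ Ioo (0:ℝ) 1 → v' ∈ Ioo (0:ℝ) 1 → v < v' → ∀ M : ℝ,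
      (∀ i, S (cdf (P i) (X i)) v' - S (cdf (P i) (X i)) v ≤ M) →
      ∃ C, 0 ≤ C ∧ ∀ i, v ≤ cdf (P i) (X i) C := by
    intro v v' hv hv' hvv M hM
    refine ⟨(max M 0 + 1)/(v' - v),
      div_nonneg (by positivity) (by linarith), fun i => ?_⟩
    by_contra hcon
    push_neg at hcon
    have hL1 := S_right_lower (hmono i) hvv hcon.le (hBdd i v' hv')
    rw [div_mul_cancel₀ _ (by linarith : v' - v ≠ 0)] at hL1
    have := hSnn i v hv
    have := hM i
    linarith [le_max_left M (0:ℝ)]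
  have fromL : ∀ u' u : ℝ, u' ∈ Ioo (0:ℝ) 1 → u ∈ Ioo (0:ℝ) 1 → u' < u → ∀ M : ℝ,
      (∀ i, S (cdf (P i) (X i)) u' - S (cdf (P i) (X i)) u ≤ M) →
      ∃ C, 0 ≤ C ∧ ∀ i, cdf (P i) (X i) (-C) ≤ u := by
    intro u' u hu' hu hlt M hM
    refine ⟨(max M 0 + 1)/(u - u'),
      div_nonneg (by positivity) (by linarith), fun i => ?_⟩
    by_contra hcon
    push_neg at hcon
    have hL3 := S_left_lower (hmono i) hlt hcon.le (hBdd i u' hu')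
    rw [div_mul_cancel₀ _ (by linarith : u - u' ≠ 0)] at hL3
    have := hSnn i u hu
    have := hM i
    linarith [le_max_left M (0:ℝ)]
  refine ⟨⟨fun ht u hu => ?_, fun hb => ?_⟩, ⟨fun ht u hu v hv => ?_, fun hb => ?_⟩,
    ⟨fun ht a b ha hab hb1 => ?_, fun hb => ?_⟩⟩
  · -- tight → B1
    obtain ⟨M, hM0, hM⟩ := keyUB ht u hu
    refine ⟨M, fun i => ?_⟩
    rw [hiqf i u hu]
    constructor
    · exact EReal.coe_le_coe_iff.2 (by linarith [hSnn i u hu])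
    · exact EReal.coe_le_coe_iff.2 (hM i)
  · -- B1 → tight
    apply tight_of
    · intro v hv
      have hv' : (1+v)/2 ∈ Ioo (0:ℝ) 1 := ⟨by linarith [hv.1], by linarith [hv.2]⟩
      obtain ⟨M, hM⟩ := hb ((1+v)/2) hv'
      refine fromR v ((1+v)/2) hv hv' (by linarith [hv.2]) M (fun i => ?_)
      have h := (hM i).2
      rw [hiqf i _ hv'] at h
      have h2 := EReal.coe_le_coe_iff.1 h
      linarith [hSnn i v hv]
    · intro u hu
      have hu' : u/2 ∈ Ioo (0:ℝ) 1 := ⟨by linarith [hu.1], by linarith [hu.1, hu.2]⟩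
      obtain ⟨M, hM⟩ := hb (u/2) hu'
      refine fromL (u/2) u hu' hu (by linarith [hu.1]) M (fun i => ?_)
      have h := (hM i).2
      rw [hiqf i _ hu'] at h
      have h2 := EReal.coe_le_coe_iff.1 h
      linarith [hSnn i u hu]
  · -- tight → B2
    obtain ⟨Mu, hMu0, hMu⟩ := keyUB ht u hu
    obtain ⟨Mv, hMv0, hMv⟩ := keyUB ht v hv
    refine ⟨Mu + Mv, fun i => ?_⟩
    rw [hiqf i u hu, hiqf i v hv]
    constructor
    · rw [← EReal.coe_sub]
      exact EReal.coe_le_coe_iff.2 (by linarith [hMu i, hSnn i v hv])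
    · rw [← EReal.coe_sub]
      exact EReal.coe_le_coe_iff.2 (by linarith [hMv i, hSnn i u hu])
  · -- B2 → tight
    apply tight_of
    · intro v hv
      have hv' : (1+v)/2 ∈ Ioo (0:ℝ) 1 := ⟨by linarith [hv.1], by linarith [hv.2]⟩
      obtain ⟨M, hM⟩ := hb ((1+v)/2) hv' v hv
      refine fromR v ((1+v)/2) hv hv' (by linarith [hv.2]) M (fun i => ?_)
      have h := (hM i).1
      rw [hiqf i _ hv', hiqf i v hv, ← EReal.coe_sub] at h
      exact EReal.coe_le_coe_iff.1 h
    · intro u hu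
      have hu' : u/2 ∈ Ioo (0:ℝ) 1 := ⟨by linarith [hu.1], by linarith [hu.1, hu.2]⟩
      obtain ⟨M, hM⟩ := hb (u/2) hu' u hu
      refine fromL (u/2) u hu' hu (by linarith [hu.1]) M (fun i => ?_)
      have h := (hM i).1
      rw [hiqf i _ hu', hiqf i u hu, ← EReal.coe_sub] at h
      exact EReal.coe_le_coe_iff.1 h
  · -- tight → B3
    obtain ⟨C₁, hC₁0, hC₁⟩ := tightR ht ((1+b)/2) ⟨by linarith, by linarith⟩
    obtain ⟨C₂, hC₂0, hC₂⟩ := tightL ht (a/2) ⟨by linarith, by linarith⟩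
    set K := max C₁ C₂ with hKdef
    have hK0 : 0 ≤ K := le_trans hC₁0 (le_max_left _ _)
    have hR : ∀ i, (1+b)/2 ≤ cdf (P i) (X i) K :=
      fun i => le_trans (hC₁ i) (hmono i (le_max_left _ _))
    have hL : ∀ i, cdf (P i) (X i) (-K) ≤ a/2 :=
      fun i => le_trans (hmono i (neg_le_neg (le_max_right _ _))) (hC₂ i)
    have hIoo : ∀ y ∈ Icc a b, y ∈ Ioo (0:ℝ) 1 :=
      fun y hy => ⟨lt_of_lt_of_le ha hy.1, lt_of_le_of_lt hy.2 hb1⟩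
    have key : ∀ i, ∀ u v : ℝ, u ∈ Icc a b → v ∈ Icc a b → u < v →
        S (cdf (P i) (X i)) v ≤ S (cdf (P i) (X i)) u + K * (v - u) ∧
        S (cdf (P i) (X i)) u ≤ S (cdf (P i) (X i)) v + K * (v - u) := by
      intro i u v hu hv huv
      constructor
      · exact S_right_upper (hmono i) (by linarith [hu.1]) huv
          (le_trans (by linarith [hv.2]) (hR i)) (hBdd i u (hIoo u hu))
      · exact S_left_upper (hmono i) huv (le_trans (hL i) (by linarith [hu.1]))
          (hBdd i v (hIoo v hv))
    intro x₀ hx₀ U hU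
    obtain ⟨ε, hε, hball⟩ := Metric.mem_uniformity_dist.mp hU
    have hKpos : (0:ℝ) < K + 1 := by linarith
    have hmem : Metric.ball x₀ (ε/(K+1)) ∩ Icc a b ∈ nhdsWithin x₀ (Icc a b) :=
      inter_mem (nhdsWithin_le_nhds (Metric.ball_mem_nhds _ (by positivity)))
        self_mem_nhdsWithin
    filter_upwards [hmem] with y hy
    intro i
    apply hball
    show dist ((iqf (P i) (X i) x₀).toReal) ((iqf (P i) (X i) y).toReal) < ε
    rw [hiqf i x₀ (hIoo x₀ hx₀), hiqf i y (hIoo y hy.2), EReal.toReal_coe, EReal.toReal_coe,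
      Real.dist_eq]
    have hd : dist y x₀ < ε/(K+1) := Metric.mem_ball.mp hy.1
    have hdist : |x₀ - y| = dist y x₀ := by rw [Real.dist_eq, abs_sub_comm]
    have hfin : |S (cdf (P i) (X i)) x₀ - S (cdf (P i) (X i)) y| ≤ K * |x₀ - y| := by
      rcases lt_trichotomy x₀ y with h | h | h
      · obtain ⟨k1, k2⟩ := key i x₀ y hx₀ hy.2 h
        rw [abs_of_neg (by linarith : x₀ - y < 0), abs_le]
        exact ⟨by linarith, by linarith⟩
      · simp [h]
      · obtain ⟨k1, k2⟩ := key i y x₀ hy.2 hx₀ h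
        rw [abs_of_pos (by linarith : (0:ℝ) < x₀ - y), abs_le]
        exact ⟨by linarith, by linarith⟩
    have h3 : |x₀ - y| < ε/(K+1) := by rw [hdist]; exact hd
    have h5 : (K+1) * (ε/(K+1)) = ε := mul_div_cancel₀ _ (ne_of_gt hKpos)
    have hq : (0:ℝ) < ε/(K+1) := by positivity
    have h4 : K * |x₀ - y| < ε := by
      nlinarith [mul_le_mul_of_nonneg_left h3.le hK0]
    linarith
  · -- B3 → tight
    apply tight_of
    · intro v hv
      have hEC := hb (v/2) ((1+v)/2) (by linarith [hv.1]) (by linarith [hv.1])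
        (by linarith [hv.2]) v ⟨by linarith [hv.1], by linarith [hv.2]⟩ _
        (Metric.dist_mem_uniformity one_pos)
      rw [Metric.nhdsWithin_basis_ball.eventually_iff] at hEC
      obtain ⟨δ, hδ, hδh⟩ := hEC
      set v' := min ((1+v)/2) (v + δ/2) with hv'def
      have hm1 : v' ≤ (1+v)/2 := min_le_left _ _
      have hm2 : v' ≤ v + δ/2 := min_le_right _ _
      have hlt : v < v' := lt_min (by linarith [hv.2]) (by linarith)
      have hv'Ioo : v' ∈ Ioo (0:ℝ) 1 := ⟨by linarith [hv.1], by linarith [hv.2]⟩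
      have hv'mem : v' ∈ Metric.ball v δ ∩ Icc (v/2) ((1+v)/2) := by
        refine ⟨Metric.mem_ball.mpr ?_, by linarith [hv.1], hm1⟩
        rw [Real.dist_eq, abs_of_pos (by linarith : (0:ℝ) < v' - v)]
        linarith
      refine fromR v v' hv hv'Ioo hlt 1 (fun i => ?_)
      have hd := hδh hv'mem i
      simp only [mem_setOf_eq] at hd
      have ev : (iqf (P i) (X i) v).toReal = S (cdf (P i) (X i)) v := by
        rw [hiqf i v hv]; exact EReal.toReal_coe _
      have ev' : (iqf (P i) (X i) v').toReal = S (cdf (P i) (X i)) v' := by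
        rw [hiqf i v' hv'Ioo]; exact EReal.toReal_coe _
      have hd2 : dist ((iqf (P i) (X i) v).toReal) ((iqf (P i) (X i) v').toReal) < 1 := hd
      rw [ev, ev', Real.dist_eq] at hd2
      have := abs_lt.mp hd2
      linarith [this.1, this.2]
    · intro u hu
      have hEC := hb (u/2) ((1+u)/2) (by linarith [hu.1]) (by linarith [hu.1])
        (by linarith [hu.2]) u ⟨by linarith [hu.1], by linarith [hu.2]⟩ _
        (Metric.dist_mem_uniformity one_pos)
      rw [Metric.nhdsWithin_basis_ball.eventually_iff] at hEC
      obtain ⟨δ, hδ, hδh⟩ := hEC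
      set u' := max (u/2) (u - δ/2) with hu'def
      have hm1 : u/2 ≤ u' := le_max_left _ _
      have hm2 : u - δ/2 ≤ u' := le_max_right _ _
      have hlt : u' < u := max_lt (by linarith [hu.1]) (by linarith)
      have hu'Ioo : u' ∈ Ioo (0:ℝ) 1 := ⟨by linarith [hu.1], by linarith [hu.2]⟩
      have hu'mem : u' ∈ Metric.ball u δ ∩ Icc (u/2) ((1+u)/2) := by
        refine ⟨Metric.mem_ball.mpr ?_, hm1, max_le (by linarith [hu.1]) (by linarith [hu.2])⟩
        rw [Real.dist_eq, abs_of_neg (by linarith : u' - u < 0)]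
        linarith
      refine fromL u' u hu'Ioo hu hlt 1 (fun i => ?_)
      have hd := hδh hu'mem i
      simp only [mem_setOf_eq] at hd
      have eu : (iqf (P i) (X i) u).toReal = S (cdf (P i) (X i)) u := by
        rw [hiqf i u hu]; exact EReal.toReal_coe _
      have eu' : (iqf (P i) (X i) u').toReal = S (cdf (P i) (X i)) u' := by
        rw [hiqf i u' hu'Ioo]; exact EReal.toReal_coe _
      have hd2 : dist ((iqf (P i) (X i) u).toReal) ((iqf (P i) (X i) u').toReal) < 1 := hd
      rw [eu, eu', Real.dist_eq] at hd2
      have := abs_lt.mp hd2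
      linarith [this.1, this.2]
end

section
/- Let μ be a probability measure on ℝ and I = (a,b) a bounded open interval. Define the balayage μ_I as the measure coinciding with μ outside [a,b], vanishing on (a,b), with μ_I({a}) = ∫_{[a,b]} (b−x)/(b−a) μ(dx) and μ_I({b}) = ∫_{[a,b]} (x−a)/(b−a) μ(dx). Then μ_I is a probability measure, μ_I([a,b]) = μ([a,b]), and ∫_{[a,b]} x μ_I(dx) = ∫_{[a,b]} x μ(dx). Moreover, if X has E[X⁺] < ∞ and Y has law μ_I where μ = Law(X), then E[Y⁺] < ∞ and iqf_Y(u) − E[Y⁺] ≤ iqf_X(u) − E[X⁺] for all u ∈ [0,1]. -/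
open MeasureTheory Filter Set

open scoped ENNReal

lemma key_fubini (ρ : Measure ℝ) [IsFiniteMeasure ρ] (c d : ℝ) (hcd : c ≤ d) :
    ∫ t in Set.Ioc c d, (ρ (Set.Iic t)).toReal = ∫ y, (max (d - y) 0 - max (c - y) 0) ∂ρ := by
  have hm : Measurable fun t : ℝ => ρ (Set.Iic t) :=
    Monotone.measurable (fun s t hst => measure_mono (Set.Iic_subset_Iic.2 hst))
  have hlt : ∫⁻ t in Set.Ioc c d, ρ (Set.Iic t) = ∫⁻ y, ENNReal.ofReal (d - max c y) ∂ρ := by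
    have hset : MeasurableSet {p : ℝ × ℝ | p.2 ≤ p.1} := measurableSet_le measurable_snd measurable_fst
    calc ∫⁻ t in Set.Ioc c d, ρ (Set.Iic t)
        = ∫⁻ t in Set.Ioc c d, ∫⁻ y, Set.indicator {p : ℝ × ℝ | p.2 ≤ p.1} (fun _ => (1:ℝ≥0∞)) (t, y) ∂ρ := by
          refine lintegral_congr fun t => ?_
          have : (fun y => Set.indicator {p : ℝ × ℝ | p.2 ≤ p.1} (fun _ => (1:ℝ≥0∞)) (t, y))
              = Set.indicator (Set.Iic t) (fun _ => (1:ℝ≥0∞)) := by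
            ext y; simp [Set.indicator_apply, Set.mem_Iic]
          rw [this, lintegral_indicator measurableSet_Iic]
          simp
      _ = ∫⁻ y, ∫⁻ t in Set.Ioc c d, Set.indicator {p : ℝ × ℝ | p.2 ≤ p.1} (fun _ => (1:ℝ≥0∞)) (t, y) ∂volume ∂ρ := by
          convert lintegral_lintegral_swap (μ := volume.restrict (Set.Ioc c d)) (ν := ρ) (f := fun t y => Set.indicator {p : ℝ × ℝ | p.2 ≤ p.1} (fun _ => (1:ℝ≥0∞)) (t, y)) (Measurable.indicator measurable_const hset).aemeasurable
      _ = ∫⁻ y, ENNReal.ofReal (d - max c y) ∂ρ := by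
          refine lintegral_congr fun y => ?_
          have : (fun t => Set.indicator {p : ℝ × ℝ | p.2 ≤ p.1} (fun _ => (1:ℝ≥0∞)) (t, y))
              = fun t => Set.indicator (Set.Ici y) (fun _ => (1:ℝ≥0∞)) t := by
            ext t; simp [Set.indicator_apply, Set.mem_Ici]
          rw [this, lintegral_indicator measurableSet_Ici]
          simp only [lintegral_const, Measure.restrict_restrict measurableSet_Ici,
            Measure.restrict_apply MeasurableSet.univ, Set.univ_inter, one_mul]
          rcases le_or_gt y c with h | h
          · have : Set.Ici y ∩ Set.Ioc c d = Set.Ioc c d := by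
              apply Set.inter_eq_right.2
              intro t ht; exact le_trans h ht.1.le
            rw [this, Real.volume_Ioc, max_eq_left h]
          · have : Set.Ici y ∩ Set.Ioc c d = Set.Icc y d := by
              ext t
              simp only [Set.mem_inter_iff, Set.mem_Ici, Set.mem_Ioc, Set.mem_Icc]
              exact ⟨fun ⟨h1, _, h3⟩ => ⟨h1, h3⟩, fun ⟨h1, h2⟩ => ⟨h1, h.trans_le h1, h2⟩⟩
            rw [this, Real.volume_Icc, max_eq_right h.le]
  have h1 : ∫ t in Set.Ioc c d, (ρ (Set.Iic t)).toReal
      = (∫⁻ t in Set.Ioc c d, ρ (Set.Iic t)).toReal :=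
    integral_toReal hm.aemeasurable (ae_of_all _ fun t => measure_lt_top ρ _)
  have h2 : ∫ y, (max (d - y) 0 - max (c - y) 0) ∂ρ
      = (∫⁻ y, ENNReal.ofReal (max (d - y) 0 - max (c - y) 0) ∂ρ).toReal := by
    apply integral_eq_lintegral_of_nonneg_ae
    · exact ae_of_all _ fun y => sub_nonneg.2 (max_le_max (by linarith) le_rfl)
    · exact (((continuous_const.sub continuous_id).max continuous_const).sub
        ((continuous_const.sub continuous_id).max continuous_const)).aestronglyMeasurable
  rw [h1, hlt, h2]
  congr 1
  refine lintegral_congr fun y => ?_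
  rcases le_total y c with h | h
  · rw [max_eq_left (by linarith : (0:ℝ) ≤ d - y), max_eq_left (by linarith : (0:ℝ) ≤ c - y),
      max_eq_left h]
    congr 1; ring
  · rcases le_total y d with h' | h'
    · rw [max_eq_left (by linarith : (0:ℝ) ≤ d - y), max_eq_right (by linarith : c - y ≤ 0),
        max_eq_right h]
      congr 1; ring
    · rw [max_eq_right (by linarith : d - y ≤ 0), max_eq_right (by linarith : c - y ≤ 0),
        max_eq_right h]
      simp [ENNReal.ofReal_of_nonpos, sub_nonpos.2 h']

lemma idf_repr (ρ : Measure ℝ) [IsFiniteMeasure ρ] (x : ℝ) :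
    idf ρ id x = ∫ y, (max (x - y) 0 - max (0 - y) 0) ∂ρ := by
  have hc : (cdf ρ id) = fun t => (ρ (Set.Iic t)).toReal := by
    funext t; simp only [cdf, id_eq]; rfl
  rcases le_total 0 x with h | h
  · rw [idf, intervalIntegral.integral_of_le h, hc]
    exact key_fubini ρ 0 x h
  · rw [idf, intervalIntegral.integral_of_ge h, hc]
    rw [key_fubini ρ x 0 h, ← integral_neg]
    congr 1; funext y; ring


lemma decomp (μ ν : Measure ℝ) (a b : ℝ) (hab : a < b)
    (hout : ∀ s : Set ℝ, MeasurableSet s → s ⊆ (Set.Icc a b)ᶜ → ν s = μ s)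
    (hmid : ν (Set.Ioo a b) = 0) :
    ν = μ.restrict (Set.Icc a b)ᶜ + ν {a} • Measure.dirac a + ν {b} • Measure.dirac b := by
  ext s hs
  have hsplit : ν s = ν (s ∩ Set.Icc a b) + ν (s ∩ (Set.Icc a b)ᶜ) := by
    rw [← Set.diff_eq, measure_inter_add_diff s measurableSet_Icc]
  have hco : ν (s ∩ (Set.Icc a b)ᶜ) = μ (s ∩ (Set.Icc a b)ᶜ) :=
    hout _ (hs.inter measurableSet_Icc.compl) Set.inter_subset_right
  have hmidpart : ν (s ∩ Set.Icc a b) = ν (s ∩ {a}) + ν (s ∩ {b}) := by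
    apply le_antisymm
    · calc ν (s ∩ Set.Icc a b) ≤ ν ((s ∩ {a}) ∪ (Set.Ioo a b ∪ (s ∩ {b}))) := by
            apply measure_mono
            rintro y ⟨hys, hya, hyb⟩
            rcases eq_or_lt_of_le hya with rfl | hya'
            · exact Or.inl ⟨hys, rfl⟩
            rcases eq_or_lt_of_le hyb with rfl | hyb'
            · exact Or.inr (Or.inr ⟨hys, rfl⟩)
            · exact Or.inr (Or.inl ⟨hya', hyb'⟩)
        _ ≤ ν (s ∩ {a}) + (ν (Set.Ioo a b) + ν (s ∩ {b})) :=
            le_trans (measure_union_le _ _) (by gcongr; exact measure_union_le _ _)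
        _ = ν (s ∩ {a}) + ν (s ∩ {b}) := by rw [hmid, zero_add]
    · have hdisj : Disjoint (s ∩ {a}) (s ∩ {b}) := by
        apply Set.disjoint_left.2
        rintro y ⟨-, rfl⟩ ⟨-, h⟩
        exact hab.ne h
      calc ν (s ∩ {a}) + ν (s ∩ {b}) = ν ((s ∩ {a}) ∪ (s ∩ {b})) :=
            (measure_union hdisj (hs.inter (measurableSet_singleton b))).symm
        _ ≤ ν (s ∩ Set.Icc a b) := by
            apply measure_mono
            rintro y (⟨hys, rfl⟩ | ⟨hys, rfl⟩)
            · exact ⟨hys, le_rfl, hab.le⟩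
            · exact ⟨hys, hab.le, le_rfl⟩
  have ha' : ν (s ∩ {a}) = ν {a} * Measure.dirac a s := by
    rw [Measure.dirac_apply' a hs]
    by_cases h : a ∈ s
    · rw [Set.inter_eq_right.2 (Set.singleton_subset_iff.2 h), Set.indicator_of_mem h]; simp
    · rw [Set.indicator_of_notMem h, mul_zero]
      convert measure_empty
      · ext y; simp only [Set.mem_inter_iff, Set.mem_singleton_iff, Set.mem_empty_iff_false, iff_false]
        rintro ⟨hy, rfl⟩; exact h hy
      · infer_instance
  have hb' : ν (s ∩ {b}) = ν {b} * Measure.dirac b s := by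
    rw [Measure.dirac_apply' b hs]
    by_cases h : b ∈ s
    · rw [Set.inter_eq_right.2 (Set.singleton_subset_iff.2 h), Set.indicator_of_mem h]; simp
    · rw [Set.indicator_of_notMem h, mul_zero]
      convert measure_empty
      · ext y; simp only [Set.mem_inter_iff, Set.mem_singleton_iff, Set.mem_empty_iff_false, iff_false]
        rintro ⟨hy, rfl⟩; exact h hy
      · infer_instance
  rw [Measure.add_apply, Measure.add_apply, Measure.smul_apply, Measure.smul_apply,
    Measure.restrict_apply hs, hsplit, hco, hmidpart, ha', hb']
  simp only [smul_eq_mul]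
  ring

lemma integrable_dirac' {f : ℝ → ℝ} (hf : Measurable f) (c : ℝ) :
    Integrable f (Measure.dirac c) := by
  refine ⟨hf.aestronglyMeasurable, ?_⟩
  rw [HasFiniteIntegral, lintegral_dirac' c (by measurability)]
  exact ENNReal.coe_lt_top

lemma max_convex (x p q r : ℝ) (hpq : p ≤ q) (hqr : q ≤ r) (hpr : p < r) :
    max x q ≤ (r - q) / (r - p) * max x p + (q - p) / (r - p) * max x r := by
  have hw : 0 < r - p := by linarith
  have h1 : 0 ≤ (r - q) / (r - p) := div_nonneg (by linarith) hw.le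
  have h2 : 0 ≤ (q - p) / (r - p) := div_nonneg (by linarith) hw.le
  rcases le_total x q with h | h
  · rw [max_eq_right h]
    calc q = (r - q) / (r - p) * p + (q - p) / (r - p) * r := by field_simp; ring
    _ ≤ (r - q) / (r - p) * max x p + (q - p) / (r - p) * max x r := by
        gcongr
        · exact le_max_right x p
        · exact le_max_right x r
  · rw [max_eq_left h]
    calc x = (r - q) / (r - p) * x + (q - p) / (r - p) * x := by field_simp; ring
    _ ≤ (r - q) / (r - p) * max x p + (q - p) / (r - p) * max x r := by
        gcongr
        · exact le_max_left x p
        · exact le_max_left x r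

lemma max_split (x y : ℝ) : max (x - y) 0 - max (0 - y) 0 + max y 0 = max x y := by
  rcases le_total x y with h | h <;> rcases le_total 0 y with h' | h'
  · rw [max_eq_right (by linarith : x - y ≤ 0), max_eq_right (by linarith : 0 - y ≤ 0),
      max_eq_left h', max_eq_right h]; ring
  · rw [max_eq_right (by linarith : x - y ≤ 0), max_eq_left (by linarith : 0 ≤ 0 - y),
      max_eq_right h', max_eq_right h]; ring
  · rw [max_eq_left (by linarith : 0 ≤ x - y), max_eq_right (by linarith : 0 - y ≤ 0),
      max_eq_left h', max_eq_left h]; ring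
  · rw [max_eq_left (by linarith : 0 ≤ x - y), max_eq_left (by linarith : 0 ≤ 0 - y),
      max_eq_right h', max_eq_left h]; ring

theorem stmt19 (μ ν : Measure ℝ) [IsProbabilityMeasure μ] (a b : ℝ) (hab : a < b)
    (hout : ∀ s : Set ℝ, MeasurableSet s → s ⊆ (Set.Icc a b)ᶜ → ν s = μ s)
    (hmid : ν (Set.Ioo a b) = 0)
    (hia : ν {a} = ENNReal.ofReal (∫ x in Set.Icc a b, (b - x) / (b - a) ∂μ))
    (hib : ν {b} = ENNReal.ofReal (∫ x in Set.Icc a b, (x - a) / (b - a) ∂μ)) :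
    IsProbabilityMeasure ν ∧
    ν (Set.Icc a b) = μ (Set.Icc a b) ∧
    (∫ x in Set.Icc a b, x ∂ν) = (∫ x in Set.Icc a b, x ∂μ) ∧
    (Integrable (fun x => max x 0) μ →
      Integrable (fun x => max x 0) ν ∧
      ∀ u ∈ Set.Icc (0:ℝ) 1,
        iqf ν id u - ((∫ x, max x 0 ∂ν : ℝ) : EReal)
          ≤ iqf μ id u - ((∫ x, max x 0 ∂μ : ℝ) : EReal)) := by
  have hw : (0:ℝ) < b - a := by linarith
  set Ia := ∫ x in Set.Icc a b, (b - x) / (b - a) ∂μ with hIadef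
  set Ib := ∫ x in Set.Icc a b, (x - a) / (b - a) ∂μ with hIbdef
  have hca : Continuous fun x : ℝ => (b - x) / (b - a) :=
    (continuous_const.sub continuous_id).div_const _
  have hcb : Continuous fun x : ℝ => (x - a) / (b - a) :=
    (continuous_id.sub continuous_const).div_const _
  have fa : IntegrableOn (fun x : ℝ => (b - x) / (b - a)) (Set.Icc a b) μ :=
    hca.continuousOn.integrableOn_compact isCompact_Icc
  have fb : IntegrableOn (fun x : ℝ => (x - a) / (b - a)) (Set.Icc a b) μ :=
    hcb.continuousOn.integrableOn_compact isCompact_Icc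
  have hIa0 : 0 ≤ Ia := setIntegral_nonneg measurableSet_Icc
    (fun x hx => div_nonneg (by linarith [hx.2]) hw.le)
  have hIb0 : 0 ≤ Ib := setIntegral_nonneg measurableSet_Icc
    (fun x hx => div_nonneg (by linarith [hx.1]) hw.le)
  have hsum : Ia + Ib = (μ (Set.Icc a b)).toReal := by
    rw [hIadef, hIbdef, ← integral_add fa fb]
    have : ∀ x ∈ Set.Icc a b, (b - x) / (b - a) + (x - a) / (b - a) = (1:ℝ) := by
      intro x hx; field_simp; ring
    rw [setIntegral_congr_fun measurableSet_Icc this]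
    simp; rfl
  have hd : ν = μ.restrict (Set.Icc a b)ᶜ + ENNReal.ofReal Ia • Measure.dirac a
      + ENNReal.ofReal Ib • Measure.dirac b := by
    rw [← hia, ← hib]; exact decomp μ ν a b hab hout hmid
  have hIcc : ν (Set.Icc a b) = μ (Set.Icc a b) := by
    rw [hd]
    simp only [Measure.add_apply, Measure.smul_apply, smul_eq_mul,
      Measure.restrict_apply measurableSet_Icc, Set.compl_inter_self,
      Measure.dirac_apply' _ measurableSet_Icc]
    rw [Set.inter_compl_self]
    simp only [measure_empty, Set.indicator_of_mem (Set.left_mem_Icc.2 hab.le),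
      Set.indicator_of_mem (Set.right_mem_Icc.2 hab.le), Pi.one_apply, mul_one, zero_add]
    rw [← ENNReal.ofReal_add hIa0 hIb0, hsum, ENNReal.ofReal_toReal (measure_ne_top μ _)]
  have hprob : IsProbabilityMeasure ν := by
    constructor
    rw [hd]
    simp only [Measure.add_apply, Measure.smul_apply, smul_eq_mul,
      Measure.restrict_apply MeasurableSet.univ, Set.univ_inter, measure_univ, mul_one]
    rw [add_assoc, ← ENNReal.ofReal_add hIa0 hIb0, hsum,
      ENNReal.ofReal_toReal (measure_ne_top μ _), add_comm,
      measure_add_measure_compl measurableSet_Icc, measure_univ]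
  haveI := hprob
  have hIntNu : ∀ f : ℝ → ℝ, Measurable f → Integrable f (μ.restrict (Set.Icc a b)ᶜ) →
      Integrable f ν := by
    intro f hf hfi
    rw [hd]
    exact (hfi.add_measure ((integrable_dirac' hf a).smul_measure ENNReal.ofReal_ne_top)).add_measure
      ((integrable_dirac' hf b).smul_measure ENNReal.ofReal_ne_top)
  have hIntEq : ∀ f : ℝ → ℝ, Measurable f → Integrable f (μ.restrict (Set.Icc a b)ᶜ) →
      ∫ y, f y ∂ν = (∫ y in (Set.Icc a b)ᶜ, f y ∂μ) + Ia * f a + Ib * f b := by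
    intro f hf hfi
    rw [hd, integral_add_measure
      (hfi.add_measure ((integrable_dirac' hf a).smul_measure ENNReal.ofReal_ne_top))
      ((integrable_dirac' hf b).smul_measure ENNReal.ofReal_ne_top),
      integral_add_measure hfi ((integrable_dirac' hf a).smul_measure ENNReal.ofReal_ne_top),
      integral_smul_measure, integral_smul_measure, integral_dirac, integral_dirac,
      ENNReal.toReal_ofReal hIa0, ENNReal.toReal_ofReal hIb0]
    simp [smul_eq_mul]
  refine ⟨hprob, hIcc, ?_, ?_⟩
  · -- mean preservation
    have hrest : ν.restrict (Set.Icc a b)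
        = ENNReal.ofReal Ia • Measure.dirac a + ENNReal.ofReal Ib • Measure.dirac b := by
      classical
      rw [hd, Measure.restrict_add, Measure.restrict_add,
        Measure.restrict_restrict measurableSet_Icc, Set.inter_compl_self,
        Measure.restrict_empty, Measure.restrict_smul, Measure.restrict_smul,
        MeasureTheory.restrict_dirac' measurableSet_Icc, MeasureTheory.restrict_dirac' measurableSet_Icc,
        if_pos (Set.left_mem_Icc.2 hab.le), if_pos (Set.right_mem_Icc.2 hab.le), zero_add]
    have hL : ∫ x in Set.Icc a b, x ∂ν = Ia * a + Ib * b := by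
      rw [hrest, integral_add_measure
        ((integrable_dirac' (f := fun y : ℝ => y) measurable_id a).smul_measure ENNReal.ofReal_ne_top)
        ((integrable_dirac' (f := fun y : ℝ => y) measurable_id b).smul_measure ENNReal.ofReal_ne_top),
        integral_smul_measure, integral_smul_measure, integral_dirac, integral_dirac,
        ENNReal.toReal_ofReal hIa0, ENNReal.toReal_ofReal hIb0]
      simp [smul_eq_mul]
    have hR : Ia * a + Ib * b = ∫ x in Set.Icc a b, x ∂μ := by
      rw [hIadef, hIbdef, mul_comm, mul_comm Ib b, ← integral_const_mul, ← integral_const_mul,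
        ← integral_add ((fa.const_mul a)) ((fb.const_mul b))]
      refine setIntegral_congr_fun measurableSet_Icc fun x hx => ?_
      field_simp
      ring
    exact hL.trans hR
  · intro hX
    have hmax : Measurable fun x : ℝ => max x 0 := measurable_id.max measurable_const
    have hIntY : Integrable (fun x => max x 0) ν := hIntNu _ hmax (hX.restrict)
    refine ⟨hIntY, ?_⟩
    intro u hu
    set Eμ := ∫ x, max x 0 ∂μ with hEμdef
    set Eν := ∫ x, max x 0 ∂ν with hEνdef
    have hkey : ∀ x : ℝ, idf μ id x + Eμ ≤ idf ν id x + Eν := by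
      intro x
      have hgmeas : Measurable fun y : ℝ => max (x - y) 0 - max (0 - y) 0 :=
        ((measurable_const.sub measurable_id).max measurable_const).sub
          ((measurable_const.sub measurable_id).max measurable_const)
      have hgbd : ∀ (ρ : Measure ℝ) [IsFiniteMeasure ρ],
          Integrable (fun y => max (x - y) 0 - max (0 - y) 0) ρ := by
        intro ρ hρ
        refine (integrable_const |x|).mono' hgmeas.aestronglyMeasurable (ae_of_all _ fun y => ?_)
        rw [Real.norm_eq_abs]
        calc |max (x - y) 0 - max (0 - y) 0| ≤ |(x - y) - (0 - y)| :=
              abs_max_sub_max_le_abs _ _ _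
          _ = |x| := by ring_nf
      have hsplitfun : ∀ (f : ℝ → ℝ), (fun y => max x y) = fun y =>
          (max (x - y) 0 - max (0 - y) 0) + max y 0 := by
        intro f; funext y; rw [max_split]
      have hmxI : Integrable (fun y => max x y) μ := by
        rw [hsplitfun id]; exact (hgbd μ).add hX
      have hmxIν : Integrable (fun y => max x y) ν := by
        rw [hsplitfun id]; exact (hgbd ν).add hIntY
      have h1 : idf μ id x + Eμ = ∫ y, max x y ∂μ := by
        rw [idf_repr μ x, hEμdef, ← integral_add (hgbd μ) hX, ← hsplitfun id]
      have h2 : idf ν id x + Eν = ∫ y, max x y ∂ν := by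
        rw [idf_repr ν x, hEνdef, ← integral_add (hgbd ν) hIntY, ← hsplitfun id]
      rw [h1, h2]
      have hmxmeas : Measurable fun y : ℝ => max x y := measurable_const.max measurable_id
      have hν_side : ∫ y, max x y ∂ν
          = (∫ y in (Set.Icc a b)ᶜ, max x y ∂μ) + Ia * max x a + Ib * max x b :=
        hIntEq _ hmxmeas (hmxI.restrict)
      have hμ_side : ∫ y, max x y ∂μ
          = (∫ y in (Set.Icc a b)ᶜ, max x y ∂μ) + ∫ y in Set.Icc a b, max x y ∂μ := by
        rw [add_comm, integral_add_compl measurableSet_Icc hmxI]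
      have hcore : ∫ y in Set.Icc a b, max x y ∂μ ≤ Ia * max x a + Ib * max x b := by
        have hrhs : Ia * max x a + Ib * max x b
            = ∫ y in Set.Icc a b,
                ((b - y) / (b - a) * max x a + (y - a) / (b - a) * max x b) ∂μ := by
          rw [hIadef, hIbdef, ← integral_mul_const, ← integral_mul_const,
            ← integral_add (fa.mul_const _) (fb.mul_const _)]
        rw [hrhs]
        refine setIntegral_mono_on hmxI.integrableOn
          ((fa.mul_const _).add (fb.mul_const _)) measurableSet_Icc fun y hy => ?_
        exact max_convex x a y b hy.1 hy.2 hab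
      rw [hν_side, hμ_side]
      linarith
    simp only [iqf]
    rw [EReal.sub_le_iff_le_add (Or.inl (EReal.coe_ne_bot Eν)) (Or.inl (EReal.coe_ne_top Eν))]
    refine iSup_le fun x => ?_
    have step1 : ((x * u - idf ν id x : ℝ) : EReal)
        ≤ ((x * u - idf μ id x - Eμ + Eν : ℝ) : EReal) :=
      EReal.coe_le_coe_iff.2 (by linarith [hkey x])
    refine le_trans step1 ?_
    have hc : ((x * u - idf μ id x - Eμ + Eν : ℝ) : EReal)
        = (((x * u - idf μ id x : ℝ) : EReal) - ((Eμ : ℝ) : EReal)) + ((Eν : ℝ) : EReal) := by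
      rw [← EReal.coe_sub, ← EReal.coe_add]
    rw [hc]
    exact add_le_add (EReal.sub_le_sub
      (le_iSup (fun x : ℝ => ((x * u - idf μ id x : ℝ) : EReal)) x) le_rfl) le_rfl
end
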